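/- arXiv:0705.1708 — 5 statements merged into one kernel-verified Lean document; each statement's English description precedes it below -/
import Mathlib

section
/- Suppose λ : ℝ → ℂ and x : ℝ → E are differentiable at 0, satisfy λ(θ)·x(θ) = θ·L(x(θ)) + (1−θ)·K(x(θ)) for all θ ∈ ℝ, and x(0) = e_i, λ(0) = μ_i for some fixed index i. Then the derivative of λ at 0 equals X_{i,i} − μ_i, i.e. λ′(0) = ⟨L e_i, e_i⟩ − μ_i. -/
open scoped InnerProductSpace

/-!
Pair the eigen-equation with `e i`. Since `K` is diagonal in `e`, `⟪e i, K w⟫ = μ i * ⟪e i, w⟫`,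
so `f θ = ⟪e i, x θ⟫` and `g θ = ⟪e i, L (x θ)⟫` satisfy the scalar equation
`λ θ * f θ = θ * g θ + (1 - θ) * μ i * f θ`. Differentiating at `0`, where `f 0 = 1` and
`λ 0 = μ i`, the two `f' 0` terms cancel and leave `λ' 0 = g 0 - μ i`.
-/

theorem OrthonormalBasis.inner_map_eq_mul_inner {𝕜 E ι : Type*} [RCLike 𝕜] [NormedAddCommGroup E]
    [InnerProductSpace 𝕜 E] [Fintype ι] [DecidableEq ι] (e : OrthonormalBasis ι 𝕜 E) {K : E →ₗ[𝕜] E}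
    {μ : ι → 𝕜} (hK : ∀ k, K (e k) = μ k • e k) (i : ι) (w : E) :
    ⟪e i, K w⟫_𝕜 = μ i * ⟪e i, w⟫_𝕜 := by
  have hcomp : (innerₛₗ 𝕜 (e i)).comp K = μ i • innerₛₗ 𝕜 (e i) := by
    refine e.toBasis.ext fun k => ?_
    by_cases hik : i = k
    · subst hik; simp [hK, inner_smul_right]
    · simp [hK, inner_smul_right, e.orthonormal.2 hik]
  simpa using LinearMap.congr_fun hcomp w

theorem deriv_eq_sub_of_mul_eq {𝕜 : Type*} [RCLike 𝕜] {lam f g : ℝ → 𝕜} {m : 𝕜}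
    (hlam : DifferentiableAt ℝ lam 0) (hf : DifferentiableAt ℝ f 0) (hg : DifferentiableAt ℝ g 0)
    (h : ∀ θ : ℝ, lam θ * f θ = θ * g θ + (1 - θ) * m * f θ) (hf0 : f 0 = 1) (hlam0 : lam 0 = m) :
    deriv lam 0 = g 0 - m := by
  have hθ : HasDerivAt (fun θ : ℝ => (θ : 𝕜)) 1 0 := by
    simpa using (RCLike.ofRealCLM (K := 𝕜)).hasDerivAt (x := 0)
  have hlhs := hlam.hasDerivAt.fun_mul hf.hasDerivAt
  have hrhs := (hθ.fun_mul hg.hasDerivAt).fun_add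
    ((((hasDerivAt_const 0 1).fun_sub hθ).mul_const m).fun_mul hf.hasDerivAt)
  rw [← funext h] at hrhs
  have hderiv := hlhs.unique hrhs
  simp only [hf0, hlam0, RCLike.ofReal_zero] at hderiv
  linear_combination hderiv

/-- If `λ : ℝ → ℂ` and `x : ℝ → E` are differentiable at `0`, satisfy
`λ(θ) • x(θ) = θ • L(x θ) + (1-θ) • K(x θ)` for all real `θ`, and `x 0 = e i`,
`λ 0 = μ i`, then `λ′(0) = X_{i,i} - μ_i = ⟨L e_i, e_i⟩ - μ_i` (inner product
linear in the first argument). -/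
theorem deriv_eigenvalue_at_zero {E : Type*} [NormedAddCommGroup E] [InnerProductSpace ℂ E]
    [FiniteDimensional ℂ E] {n : ℕ} (e : OrthonormalBasis (Fin n) ℂ E)
    (K L : E →ₗ[ℂ] E) (μ : Fin n → ℂ) (hK : ∀ k, K (e k) = μ k • e k)
    (lam : ℝ → ℂ) (x : ℝ → E)
    (hlam : DifferentiableAt ℝ lam 0) (hx : DifferentiableAt ℝ x 0)
    (hlx : ∀ θ : ℝ, lam θ • x θ = (θ : ℂ) • L (x θ) + ((1 : ℂ) - (θ : ℂ)) • K (x θ))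
    (i : Fin n) (hx0 : x 0 = e i) (hlam0 : lam 0 = μ i) :
    deriv lam 0 = ⟪e i, L (e i)⟫_ℂ - μ i := by
  have hLx : DifferentiableAt ℝ (fun θ => L (x θ)) 0 :=
    (L.toContinuousLinearMap.restrictScalars ℝ).differentiableAt.comp 0 hx
  have hscalar : ∀ θ : ℝ, lam θ * ⟪e i, x θ⟫_ℂ
      = θ * ⟪e i, L (x θ)⟫_ℂ + (1 - θ) * μ i * ⟪e i, x θ⟫_ℂ := fun θ => by
    have hpair := congrArg (⟪e i, ·⟫_ℂ) (hlx θ)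
    simp only [inner_add_right, inner_smul_right, e.inner_map_eq_mul_inner hK] at hpair
    linear_combination hpair
  have hderiv := deriv_eq_sub_of_mul_eq hlam ((differentiableAt_const _).inner ℂ hx)
    ((differentiableAt_const _).inner ℂ hLx) hscalar (by simp [hx0]) hlam0
  simpa only [hx0] using hderiv
end

section
/- Suppose λ : ℝ → ℂ and x : ℝ → E are differentiable at 0, satisfy λ(θ)·x(θ) = θ·L(x(θ)) + (1−θ)·K(x(θ)) for all θ ∈ ℝ, and x(0) = e_i, λ(0) = μ_i for some fixed index i. Then for every index k ≠ i with μ_k ≠ μ_i, the component of the derivative x′(0) along e_k is ⟨x′(0), e_k⟩ = X_{i,k} / (μ_i − μ_k). -/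
open scoped InnerProductSpace

/-! Differentiating the eigen-equation at `θ = 0` gives
`μ_i x′(0) + λ′(0) e_i = L e_i + K x′(0) - K e_i`. Pairing with `e_k` kills every
multiple of `e_i`, and `K` acts on the `e_k`-coordinate as multiplication by `μ_k`, so
`μ_i ⟪e_k, x′(0)⟫ = ⟪e_k, L e_i⟫ + μ_k ⟪e_k, x′(0)⟫`. -/

theorem OrthonormalBasis.inner_map_of_apply_eq_smul {ι 𝕜 E : Type*} [Fintype ι] [RCLike 𝕜]
    [NormedAddCommGroup E] [InnerProductSpace 𝕜 E] (e : OrthonormalBasis ι 𝕜 E)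
    {K : E →ₗ[𝕜] E} {μ : ι → 𝕜} (hK : ∀ j, K (e j) = μ j • e j) (k : ι) (v : E) :
    ⟪e k, K v⟫_𝕜 = μ k * ⟪e k, v⟫_𝕜 := by
  suffices h : (innerₛₗ 𝕜 (e k)).comp K = μ k • innerₛₗ 𝕜 (e k) from LinearMap.congr_fun h v
  refine e.toBasis.ext fun j => ?_
  rcases eq_or_ne k j with rfl | hkj
  · simp [hK, inner_smul_right]
  · simp [hK, inner_smul_right, e.orthonormal.2 hkj]

section Homotopy

variable {E : Type*} [NormedAddCommGroup E] [InnerProductSpace ℂ E] [FiniteDimensional ℂ E]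

theorem hasDerivAt_linearMap_comp (L : E →ₗ[ℂ] E) {x : ℝ → E} {x' : E} {t : ℝ}
    (hx : HasDerivAt x x' t) : HasDerivAt (fun θ => L (x θ)) (L x') t :=
  (L.toContinuousLinearMap.restrictScalars ℝ).hasFDerivAt.comp_hasDerivAt t hx

theorem hasDerivAt_homotopy_apply (K L : E →ₗ[ℂ] E) {x : ℝ → E} {x' : E} {t : ℝ}
    (hx : HasDerivAt x x' t) :
    HasDerivAt (fun θ : ℝ => (θ : ℂ) • L (x θ) + ((1 : ℂ) - (θ : ℂ)) • K (x θ))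
      (((t : ℂ) • L x' + L (x t)) + (((1 : ℂ) - (t : ℂ)) • K x' - K (x t))) t := by
  have hcoe : HasDerivAt (fun θ : ℝ => (θ : ℂ)) 1 t := Complex.ofRealCLM.hasDerivAt
  have h : HasDerivAt (fun θ : ℝ => (θ : ℂ) • L (x θ) + ((1 : ℂ) - (θ : ℂ)) • K (x θ))
      (((t : ℂ) • L x' + (1 : ℂ) • L (x t))
        + (((1 : ℂ) - (t : ℂ)) • K x' + ((0 : ℂ) - 1) • K (x t))) t :=
    (hcoe.smul (hasDerivAt_linearMap_comp L hx)).add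
      (((hasDerivAt_const t (1 : ℂ)).sub hcoe).smul (hasDerivAt_linearMap_comp K hx))
  simpa [sub_eq_add_neg] using h

theorem deriv_eigen_equation (K L : E →ₗ[ℂ] E) {lam : ℝ → ℂ} {x : ℝ → E}
    {lam' : ℂ} {x' : E} {t : ℝ} (hlam : HasDerivAt lam lam' t) (hx : HasDerivAt x x' t)
    (hlx : ∀ θ : ℝ, lam θ • x θ = (θ : ℂ) • L (x θ) + ((1 : ℂ) - (θ : ℂ)) • K (x θ)) :
    lam t • x' + lam' • x t
      = ((t : ℂ) • L x' + L (x t)) + (((1 : ℂ) - (t : ℂ)) • K x' - K (x t)) := by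
  have hprod : HasDerivAt (fun θ => lam θ • x θ) (lam t • x' + lam' • x t) t := hlam.smul hx
  rw [funext hlx] at hprod
  exact hprod.unique (hasDerivAt_homotopy_apply K L hx)

end Homotopy

/-- If `λ : ℝ → ℂ` and `x : ℝ → E` are differentiable at `0`, satisfy
`λ(θ) • x(θ) = θ • L(x θ) + (1-θ) • K(x θ)` for all real `θ`, and `x 0 = e i`,
`λ 0 = μ i`, then for every index `k ≠ i` with `μ k ≠ μ i`, the component of the
derivative `x′(0)` along `e k` is `⟨x′(0), e k⟩ = X_{i,k} / (μ_i - μ_k)`, where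
`X_{m,l} = ⟨L e_m, e_l⟩` (inner product linear in the first argument). -/
theorem deriv_eigenvector_component_at_zero {E : Type*} [NormedAddCommGroup E]
    [InnerProductSpace ℂ E] [FiniteDimensional ℂ E] {n : ℕ}
    (e : OrthonormalBasis (Fin n) ℂ E)
    (K L : E →ₗ[ℂ] E) (μ : Fin n → ℂ) (hK : ∀ k, K (e k) = μ k • e k)
    (lam : ℝ → ℂ) (x : ℝ → E)
    (hlam : DifferentiableAt ℝ lam 0) (hx : DifferentiableAt ℝ x 0)
    (hlx : ∀ θ : ℝ, lam θ • x θ = (θ : ℂ) • L (x θ) + ((1 : ℂ) - (θ : ℂ)) • K (x θ))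
    (i : Fin n) (hx0 : x 0 = e i) (hlam0 : lam 0 = μ i) :
    ∀ k : Fin n, k ≠ i → μ k ≠ μ i →
      ⟪e k, deriv x 0⟫_ℂ = ⟪e k, L (e i)⟫_ℂ / (μ i - μ k) := by
  intro k hki hμ
  have hderiv := deriv_eigen_equation K L hlam.hasDerivAt hx.hasDerivAt hlx
  have hcomp := congrArg (fun v => ⟪e k, v⟫_ℂ) hderiv
  simp only [hx0, hlam0, inner_add_right, inner_sub_right, inner_smul_right,
    e.inner_map_of_apply_eq_smul hK, e.orthonormal.2 hki, Complex.ofReal_zero] at hcomp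
  rw [eq_div_iff (sub_ne_zero.mpr hμ.symm)]
  linear_combination hcomp
end

section
/- The recursively defined coefficients a and b formally solve the perturbation equations: for every index k and every r ≥ 1, Σ_{m=0}^{r} a_{r−m}·b_{k,m} = Σ_{j=1}^{n} X_{j,k}·b_{j,r−1} + μ_k·b_{k,r} − μ_k·b_{k,r−1}; moreover (a_0 − μ_k)·b_{k,0} = 0 for every k. -/
/-!
Split off the `m = 0` term of `Σ_{m ≤ r} a_{r-m} b_{k,m}`. For `k = i` it is `a_r`, and the
equation is the recursion defining `a_r`. For `k ≠ i` it vanishes, and splitting off the `m = r`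
term `a_0 b_{k,r} = μ_i b_{k,r}` leaves exactly the equation that the recursion for `b_{k,r}`
solves after multiplying by `μ_i - μ_k ≠ 0`.
-/

open scoped InnerProductSpace

open Finset

theorem sum_range_succ_eq_add_sum_Icc_one {M : Type*} [AddCommMonoid M] (f : ℕ → M) (r : ℕ) :
    ∑ m ∈ range (r + 1), f m = f 0 + ∑ m ∈ Icc 1 r, f m := by
  rw [range_eq_Ico, sum_eq_sum_Ico_succ_bot r.succ_pos, zero_add, Nat.succ_eq_add_one,
    Ico_add_one_right_eq_Icc]

theorem cauchy_sum_eq_of_apply_zero_eq_one {R : Type*} [CommRing R] {a c : ℕ → R} {μ S : R}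
    {r : ℕ} (hc0 : c 0 = 1)
    (ha : a r = S + μ * (c r - c (r - 1)) - ∑ m ∈ Icc 1 r, a (r - m) * c m) :
    ∑ m ∈ range (r + 1), a (r - m) * c m = S + μ * c r - μ * c (r - 1) := by
  rw [sum_range_succ_eq_add_sum_Icc_one, Nat.sub_zero, hc0, ha]
  ring

theorem cauchy_sum_eq_of_apply_zero_eq_zero {K : Type*} [Field K] {a c : ℕ → K} {ν μ S : K}
    {r : ℕ} (hr : 1 ≤ r) (hc0 : c 0 = 0) (ha0 : a 0 = ν) (hμν : μ ≠ ν)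
    (hc : c r = (ν - μ)⁻¹ * (S - ∑ m ∈ Icc 1 (r - 1), a (r - m) * c m - μ * c (r - 1))) :
    ∑ m ∈ range (r + 1), a (r - m) * c m = S + μ * c r - μ * c (r - 1) := by
  obtain ⟨s, rfl⟩ := Nat.exists_eq_add_of_le' hr
  rw [Nat.add_sub_cancel] at hc ⊢
  have hc' : (ν - μ) * c (s + 1) = S - ∑ m ∈ Icc 1 s, a (s + 1 - m) * c m - μ * c s := by
    rw [hc, mul_inv_cancel_left₀ (sub_ne_zero.mpr hμν.symm)]
  rw [sum_range_succ_eq_add_sum_Icc_one, sum_Icc_succ_top (by omega), Nat.sub_self, hc0, ha0]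
  linear_combination hc'

theorem recursion_solves_perturbation_equations_general {n : ℕ} (μ : Fin n → ℂ)
    (X : Fin n → Fin n → ℂ) (i : Fin n) (hμ : ∀ k, k ≠ i → μ k ≠ μ i)
    (a : ℕ → ℂ) (b : Fin n → ℕ → ℂ)
    (ha0 : a 0 = μ i)
    (hb0 : ∀ k, b k 0 = if k = i then 1 else 0)
    (hbk : ∀ k, k ≠ i → ∀ r : ℕ, 1 ≤ r →
      b k r = (μ i - μ k)⁻¹ *
        (∑ j, X j k * b j (r - 1) - ∑ m ∈ Finset.Icc 1 (r - 1), a (r - m) * b k m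
          - μ k * b k (r - 1)))
    (har : ∀ r : ℕ, 1 ≤ r →
      a r = ∑ j, X j i * b j (r - 1) + μ i * (b i r - b i (r - 1))
        - ∑ m ∈ Finset.Icc 1 r, a (r - m) * b i m) :
    ∀ k : Fin n,
      (a 0 - μ k) * b k 0 = 0 ∧
      ∀ r : ℕ, 1 ≤ r →
        ∑ m ∈ Finset.range (r + 1), a (r - m) * b k m =
          ∑ j, X j k * b j (r - 1) + μ k * b k r - μ k * b k (r - 1) := by
  intro k
  by_cases hk : k = i
  · subst hk
    exact ⟨by rw [ha0, sub_self, zero_mul], fun r hr ↦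
      cauchy_sum_eq_of_apply_zero_eq_one (by simp [hb0]) (har r hr)⟩
  · have hbk0 : b k 0 = 0 := by simp [hb0, hk]
    exact ⟨by rw [hbk0, mul_zero], fun r hr ↦
      cauchy_sum_eq_of_apply_zero_eq_zero hr hbk0 ha0 (hμ k hk) (hbk k hk r hr)⟩

/-- The recursively defined coefficients `a`, `b` formally solve the perturbation
equations: `(a_0 - μ_k)·b_{k,0} = 0`, and for every `r ≥ 1`,
`Σ_{m=0}^r a_{r-m}·b_{k,m} = Σ_j X_{j,k}·b_{j,r-1} + μ_k·b_{k,r} - μ_k·b_{k,r-1}`,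
where `X_{m,l} = ⟨L e_m, e_l⟩` (inner product linear in the first argument). -/
theorem recursion_solves_perturbation_equations {E : Type*} [NormedAddCommGroup E]
    [InnerProductSpace ℂ E] [FiniteDimensional ℂ E] {n : ℕ}
    (e : OrthonormalBasis (Fin n) ℂ E)
    (K L : E →ₗ[ℂ] E) (μ : Fin n → ℂ) (hK : ∀ k, K (e k) = μ k • e k)
    (X : Fin n → Fin n → ℂ) (hX : ∀ m l, X m l = ⟪e l, L (e m)⟫_ℂ)
    (i : Fin n) (hμ : ∀ k, k ≠ i → μ k ≠ μ i)
    (a : ℕ → ℂ) (b : Fin n → ℕ → ℂ)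
    (ha0 : a 0 = μ i)
    (hb0 : ∀ k, b k 0 = if k = i then 1 else 0)
    (hbi : ∀ r : ℕ, 1 ≤ r → b i r = 0)
    (hbk : ∀ k, k ≠ i → ∀ r : ℕ, 1 ≤ r →
      b k r = (μ i - μ k)⁻¹ *
        (∑ j, X j k * b j (r - 1) - ∑ m ∈ Finset.Icc 1 (r - 1), a (r - m) * b k m
          - μ k * b k (r - 1)))
    (har : ∀ r : ℕ, 1 ≤ r →
      a r = ∑ j, X j i * b j (r - 1) + μ i * (b i r - b i (r - 1))
        - ∑ m ∈ Finset.Icc 1 r, a (r - m) * b i m) :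
    ∀ k : Fin n,
      (a 0 - μ k) * b k 0 = 0 ∧
      ∀ r : ℕ, 1 ≤ r →
        ∑ m ∈ Finset.range (r + 1), a (r - m) * b k m =
          ∑ j, X j k * b j (r - 1) + μ k * b k r - μ k * b k (r - 1) :=
  recursion_solves_perturbation_equations_general μ X i hμ a b ha0 hb0 hbk har
end

section
/- Suppose the recursively defined coefficient sequences satisfy Σ_{s=0}^{∞} |a_s| < ∞ and Σ_{r=0}^{∞} |b_{k,r}| < ∞ for every index k. Then for every θ ∈ ℝ with |θ| ≤ 1, setting λ(θ) := Σ_{s=0}^{∞} a_s θ^s and x(θ) := Σ_{k=1}^{n} (Σ_{r=0}^{∞} b_{k,r} θ^r)·e_k, one has θ·L(x(θ)) + (1−θ)·K(x(θ)) = λ(θ)·x(θ), and moreover ⟨x(θ), e_i⟩ = 1, so in particular x(θ) ≠ 0. -/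
open scoped InnerProductSpace

/-- Shift a sequence by one, putting `0` in front. -/
def shift0 (f : ℕ → ℂ) : ℕ → ℂ
  | 0 => 0
  | (s+1) => f s

/-- If the recursively defined coefficient sequences are absolutely summable, then
for every `θ` with `|θ| ≤ 1`, setting `λ(θ) = Σ_s a_s θ^s` and
`x(θ) = Σ_k (Σ_r b_{k,r} θ^r) • e_k`, one has
`θ • L(x θ) + (1-θ) • K(x θ) = λ(θ) • x(θ)`, and `⟨x(θ), e_i⟩ = 1` (inner product
linear in the first argument), so in particular `x(θ) ≠ 0`. -/
theorem homotopy_eigenvalue_problem {E : Type*} [NormedAddCommGroup E]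
    [InnerProductSpace ℂ E] [FiniteDimensional ℂ E] {n : ℕ}
    (e : OrthonormalBasis (Fin n) ℂ E)
    (K L : E →ₗ[ℂ] E) (μ : Fin n → ℂ) (hK : ∀ k, K (e k) = μ k • e k)
    (X : Fin n → Fin n → ℂ) (hX : ∀ m l, X m l = ⟪e l, L (e m)⟫_ℂ)
    (i : Fin n) (hμ : ∀ k, k ≠ i → μ k ≠ μ i)
    (a : ℕ → ℂ) (b : Fin n → ℕ → ℂ)
    (ha0 : a 0 = μ i)
    (hb0 : ∀ k, b k 0 = if k = i then 1 else 0)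
    (hbi : ∀ r : ℕ, 1 ≤ r → b i r = 0)
    (hbk : ∀ k, k ≠ i → ∀ r : ℕ, 1 ≤ r →
      b k r = (μ i - μ k)⁻¹ *
        (∑ j, X j k * b j (r - 1) - ∑ m ∈ Finset.Icc 1 (r - 1), a (r - m) * b k m
          - μ k * b k (r - 1)))
    (har : ∀ r : ℕ, 1 ≤ r →
      a r = ∑ j, X j i * b j (r - 1) + μ i * (b i r - b i (r - 1))
        - ∑ m ∈ Finset.Icc 1 r, a (r - m) * b i m)
    (hasum : Summable fun s : ℕ => ‖a s‖)
    (hbsum : ∀ k : Fin n, Summable fun r : ℕ => ‖b k r‖) :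
    ∀ θ : ℝ, |θ| ≤ 1 →
      (θ : ℂ) • L (∑ k, (∑' r : ℕ, b k r * (θ : ℂ) ^ r) • e k) +
          ((1 : ℂ) - (θ : ℂ)) • K (∑ k, (∑' r : ℕ, b k r * (θ : ℂ) ^ r) • e k) =
        (∑' s : ℕ, a s * (θ : ℂ) ^ s) • ∑ k, (∑' r : ℕ, b k r * (θ : ℂ) ^ r) • e k ∧
      ⟪e i, ∑ k, (∑' r : ℕ, b k r * (θ : ℂ) ^ r) • e k⟫_ℂ = 1 ∧
      (∑ k, (∑' r : ℕ, b k r * (θ : ℂ) ^ r) • e k) ≠ 0 := by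
  intro θ hθ
  set t : ℂ := (θ : ℂ) with ht
  have ht1 : ‖t‖ ≤ 1 := by simpa [ht] using hθ
  have hpow : ∀ r : ℕ, ‖t ^ r‖ ≤ 1 := fun r => by
    rw [norm_pow]; exact pow_le_one₀ (norm_nonneg _) ht1
  -- norm summability of the θ-power series
  have hAn : Summable fun s : ℕ => ‖a s * t ^ s‖ :=
    Summable.of_nonneg_of_le (fun _ => norm_nonneg _)
      (fun s => by
        rw [norm_mul]
        exact mul_le_of_le_one_right (norm_nonneg _) (hpow s)) hasum
  have hBn : ∀ k, Summable fun r : ℕ => ‖b k r * t ^ r‖ := fun k =>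
    Summable.of_nonneg_of_le (fun _ => norm_nonneg _)
      (fun r => by
        rw [norm_mul]
        exact mul_le_of_le_one_right (norm_nonneg _) (hpow r)) (hbsum k)
  set β : Fin n → ℂ := fun k => ∑' r : ℕ, b k r * t ^ r with hβ
  set lam : ℂ := ∑' s : ℕ, a s * t ^ s with hlam
  -- HasSum for shifted series
  have hS : ∀ j, HasSum (fun r => shift0 (b j) r * t ^ r) (t * β j) := by
    intro j
    have h1 : HasSum (fun r : ℕ => shift0 (b j) (r + 1) * t ^ (r + 1)) (t * β j) := by
      have h0 := ((hBn j).of_norm.hasSum).mul_left t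
      have hfg : (fun r : ℕ => shift0 (b j) (r + 1) * t ^ (r + 1))
          = fun r : ℕ => t * (b j r * t ^ r) := by
        funext r; simp [shift0, pow_succ]; ring
      rw [hfg]; exact h0
    have h2 := (hasSum_nat_add_iff (f := fun r : ℕ => shift0 (b j) r * t ^ r) 1).mp h1
    simpa [shift0] using h2
  -- inner product with basis vectors of a linear combination
  have hin : ∀ (c : Fin n → ℂ) (l : Fin n), ⟪e l, ∑ k, c k • e k⟫_ℂ = c l := by
    intro c l
    rw [inner_sum]
    simp [inner_smul_right, orthonormal_iff_ite.mp e.orthonormal]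
  -- the coefficient identity
  have hcoef : ∀ (l : Fin n) (r : ℕ),
      ∑ j, X j l * shift0 (b j) r + μ l * b l r - μ l * shift0 (b l) r
        = ∑ m ∈ Finset.range (r + 1), a m * b l (r - m) := by
    intro l r
    cases r with
    | zero =>
      simp only [shift0, mul_zero, sub_zero, Finset.sum_const_zero, zero_add,
        Finset.range_one, Finset.sum_singleton, Nat.sub_zero, ha0]
      rcases eq_or_ne l i with h | hl
      · rw [h]
      · rw [hb0 l, if_neg hl]; ring
    | succ s =>
      set r : ℕ := s + 1 with hr
      have h1 : ∑ m ∈ Finset.range (r + 1), a m * b l (r - m)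
          = ∑ m ∈ Finset.range (r + 1), a (r - m) * b l m := by
        rw [← Finset.sum_range_reflect (fun m => a (r - m) * b l m) (r + 1)]
        refine Finset.sum_congr rfl fun m hm => ?_
        have hm' : m ≤ r := by
          have := Finset.mem_range.mp hm; omega
        have e1 : r - (r + 1 - 1 - m) = m := by omega
        have e2 : r + 1 - 1 - m = r - m := by omega
        rw [e1, e2]
      have hins : Finset.range (r + 1) = insert 0 (Finset.Icc 1 r) := by
        ext m
        simp only [Finset.mem_range, Finset.mem_insert, Finset.mem_Icc]
        omega
      have h2 : ∑ m ∈ Finset.range (r + 1), a (r - m) * b l m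
          = a r * b l 0 + (∑ m ∈ Finset.Icc 1 s, a (r - m) * b l m + a 0 * b l r) := by
        rw [hins, Finset.sum_insert (by simp)]
        rw [show (Finset.Icc 1 r) = Finset.Icc 1 (s + 1) from rfl,
          Finset.sum_Icc_succ_top (by omega)]
        have e3 : r - (s + 1) = 0 := by omega
        rw [e3, Nat.sub_zero]
      rw [h1, h2]
      have hss : shift0 (b l) r = b l s := rfl
      have hsj : ∀ j : Fin n, shift0 (b j) r = b j s := fun j => rfl
      simp only [hss, hsj]
      rcases eq_or_ne l i with h | hl
      · rw [h]
        -- l = i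
        have hz1 : ∑ m ∈ Finset.Icc 1 s, a (r - m) * b i m = 0 :=
          Finset.sum_eq_zero fun m hm => by
            rw [hbi m (Finset.mem_Icc.mp hm).1]; ring
        have hz2 : b i r = 0 := hbi r (by omega)
        have hz3 : ∑ m ∈ Finset.Icc 1 r, a (r - m) * b i m = 0 :=
          Finset.sum_eq_zero fun m hm => by
            rw [hbi m (Finset.mem_Icc.mp hm).1]; ring
        have h4 := har r (by omega)
        rw [hz3, Nat.add_sub_cancel, hz2] at h4
        rw [hb0 i, if_pos rfl, hz1, hz2, h4]
        ring
      · -- l ≠ i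
        have hne : μ i - μ l ≠ 0 := sub_ne_zero.mpr (Ne.symm (hμ l hl))
        have hD : (μ i - μ l) * b l r
            = ∑ j, X j l * b j s - ∑ m ∈ Finset.Icc 1 s, a (r - m) * b l m
              - μ l * b l s := by
          rw [hbk l hl r (by omega), Nat.add_sub_cancel, ← mul_assoc,
            mul_inv_cancel₀ hne, one_mul]
        rw [hb0 l, if_neg hl, ha0]
        linear_combination -hD
  -- scalar identity per coordinate
  have main : ∀ l : Fin n, t * (∑ k, X k l * β k) + (1 - t) * (μ l * β l) = lam * β l := by
    intro l
    have h1 : HasSum (fun r : ℕ => ∑ j, X j l * (shift0 (b j) r * t ^ r))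
        (∑ j, X j l * (t * β j)) := hasSum_sum fun j _ => (hS j).mul_left _
    have h2 : HasSum (fun r : ℕ => μ l * (b l r * t ^ r)) (μ l * β l) :=
      ((hBn l).of_norm.hasSum).mul_left _
    have h3 : HasSum (fun r : ℕ => μ l * (shift0 (b l) r * t ^ r)) (μ l * (t * β l)) :=
      (hS l).mul_left _
    have hG : HasSum (fun r : ℕ =>
        (∑ j, X j l * shift0 (b j) r + μ l * b l r - μ l * shift0 (b l) r) * t ^ r)
        (t * (∑ k, X k l * β k) + (1 - t) * (μ l * β l)) := by
      have h4 := (h1.add h2).sub h3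
      have hfg : (fun r : ℕ =>
          (∑ j, X j l * shift0 (b j) r + μ l * b l r - μ l * shift0 (b l) r) * t ^ r)
          = fun r : ℕ => (∑ j, X j l * (shift0 (b j) r * t ^ r)) + μ l * (b l r * t ^ r)
            - μ l * (shift0 (b l) r * t ^ r) := by
        funext r
        rw [sub_mul, add_mul, Finset.sum_mul]
        simp only [mul_assoc]
      have hval : ∑ j, X j l * (t * β j) + μ l * β l - μ l * (t * β l)
          = t * (∑ k, X k l * β k) + (1 - t) * (μ l * β l) := by
        rw [show (∑ j, X j l * (t * β j)) = ∑ j, t * (X j l * β j) from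
          Finset.sum_congr rfl fun j _ => by ring, ← Finset.mul_sum]
        ring
      rw [hfg, ← hval]
      exact h4
    have hC : HasSum (fun r : ℕ =>
        (∑ m ∈ Finset.range (r + 1), a m * b l (r - m)) * t ^ r) (lam * β l) := by
      have h := hasSum_sum_range_mul_of_summable_norm hAn (hBn l)
      have hfg : (fun r : ℕ =>
          ∑ m ∈ Finset.range (r + 1), (a m * t ^ m) * (b l (r - m) * t ^ (r - m)))
          = fun r : ℕ => (∑ m ∈ Finset.range (r + 1), a m * b l (r - m)) * t ^ r := by
        funext r
        rw [Finset.sum_mul]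
        refine Finset.sum_congr rfl fun m hm => ?_
        have hm' : m ≤ r := by have := Finset.mem_range.mp hm; omega
        have hp : t ^ m * t ^ (r - m) = t ^ r := by rw [← pow_add]; congr 1; omega
        calc a m * t ^ m * (b l (r - m) * t ^ (r - m))
            = a m * b l (r - m) * (t ^ m * t ^ (r - m)) := by ring
          _ = a m * b l (r - m) * t ^ r := by rw [hp]
      rw [← hfg]
      exact h
    exact hG.tsum_eq.symm.trans
      ((tsum_congr fun r => by rw [hcoef l r]).trans hC.tsum_eq)
  have hext : ∀ v w : E, (∀ l, ⟪e l, v⟫_ℂ = ⟪e l, w⟫_ℂ) → v = w := by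
    intro v w h
    apply e.repr.injective
    ext l
    simp only [OrthonormalBasis.repr_apply_apply]
    exact h l
  have hβi : β i = 1 := by
    have hs : Summable fun r : ℕ => b i r * t ^ r := (hBn i).of_norm
    have hz : ∀ r : ℕ, b i (r + 1) * t ^ (r + 1) = 0 := fun r => by
      rw [hbi (r + 1) (by omega)]; ring
    calc β i = ∑' r : ℕ, b i r * t ^ r := rfl
      _ = b i 0 * t ^ 0 + ∑' r : ℕ, b i (r + 1) * t ^ (r + 1) := Summable.tsum_eq_zero_add hs
      _ = 1 := by simp [hz, hb0 i]
  have hip : ⟪e i, ∑ k, β k • e k⟫_ℂ = 1 := by rw [hin β i, hβi]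
  refine ⟨?_, hip, ?_⟩
  · show t • L (∑ k, β k • e k) + (1 - t) • K (∑ k, β k • e k) = lam • ∑ k, β k • e k
    apply hext
    intro l
    rw [inner_add_right, inner_smul_right, inner_smul_right, inner_smul_right]
    have hLx : L (∑ k, β k • e k) = ∑ k, β k • L (e k) := by
      rw [map_sum]; simp only [map_smul]
    have hLin : ⟪e l, L (∑ k, β k • e k)⟫_ℂ = ∑ k, X k l * β k := by
      rw [hLx, inner_sum]
      exact Finset.sum_congr rfl fun k _ => by rw [inner_smul_right, ← hX k l]; ring
    have hKx : K (∑ k, β k • e k) = ∑ k, (μ k * β k) • e k := by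
      rw [map_sum]
      refine Finset.sum_congr rfl fun k _ => ?_
      rw [map_smul, hK k, smul_smul, mul_comm]
    have hKin : ⟪e l, K (∑ k, β k • e k)⟫_ℂ = μ l * β l := by
      rw [hKx]; exact hin _ l
    rw [hLin, hKin, hin β l]
    exact main l
  · intro h0
    rw [h0, inner_zero_right] at hip
    exact zero_ne_one hip
end

section
/- Suppose the recursively defined coefficient sequences satisfy Σ_{s=0}^{∞} |a_s| < ∞ and Σ_{r=0}^{∞} |b_{k,r}| < ∞ for every index k. Then λ := Σ_{s=0}^{∞} a_s is an eigenvalue of L with eigenvector x := Σ_{k=1}^{n} (Σ_{r=0}^{∞} b_{k,r})·e_k; that is, L x = λ·x and x ≠ 0 (indeed ⟨x, e_i⟩ = 1). -/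
/-!
Write `A = Σ a_s` and `B_k = Σ_r b_{k,r}`. The recursion is arranged so that, for every `k` and
`r`, `Σ_j X_{j,k} b_{j,r} = Σ_{m=0}^{r+1} a_{r+1-m} b_{k,m} + μ_k (b_{k,r} - b_{k,r+1})`.
Summing over `r`, the first term is the Cauchy product `A B_k` minus its zeroth term
`a_0 b_{k,0} = μ_i b_{k,0}`, and the second telescopes to `μ_k b_{k,0}`; these cancel because
`b_{k,0}` vanishes unless `k = i`. Hence `Σ_j X_{j,k} B_j = A B_k`, i.e. the coordinate vector
`B` is an eigenvector, with eigenvalue `A`, of the matrix of `L` in the basis `e`.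
-/

open scoped InnerProductSpace

open Finset

theorem HasSum.sub_succ {G : Type*} [AddCommGroup G] [TopologicalSpace G]
    [IsTopologicalAddGroup G] {d : ℕ → G} {s : G} (h : HasSum d s) :
    HasSum (fun r => d r - d (r + 1)) (d 0) := by
  simpa using h.sub ((hasSum_nat_add_iff' 1).2 h)

theorem hasSum_sum_range_succ_mul_of_summable_norm {R : Type*} [NormedCommRing R]
    [CompleteSpace R] {a b : ℕ → R} (ha : Summable fun s => ‖a s‖)
    (hb : Summable fun r => ‖b r‖) :
    HasSum (fun r => ∑ m ∈ range (r + 2), a (r + 1 - m) * b m)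
      ((∑' s, a s) * (∑' r, b r) - a 0 * b 0) := by
  set c : ℕ → R := fun r => ∑ m ∈ range (r + 1), b m * a (r - m)
  have hc : HasSum c ((∑' s, a s) * ∑' r, b r) := by
    rw [mul_comm, tsum_mul_tsum_eq_tsum_sum_range_of_summable_norm hb ha]
    exact (summable_norm_sum_mul_range_of_summable_norm hb ha).of_norm.hasSum
  have hc_succ : (fun r => ∑ m ∈ range (r + 2), a (r + 1 - m) * b m) = fun r => c (r + 1) :=
    funext fun r => sum_congr rfl fun m _ => mul_comm _ _
  simpa [hc_succ, c, mul_comm] using (hasSum_nat_add_iff' 1).2 hc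

theorem OrthonormalBasis.map_sum_smul_eq_smul_of_matrix_eigen {ι 𝕜 E : Type*} [Fintype ι]
    [RCLike 𝕜] [NormedAddCommGroup E] [InnerProductSpace 𝕜 E] (e : OrthonormalBasis ι 𝕜 E)
    (L : E →ₗ[𝕜] E) (x : ι → 𝕜) (c : 𝕜) (h : ∀ l, ∑ k, ⟪e l, L (e k)⟫_𝕜 * x k = c * x l) :
    L (∑ k, x k • e k) = c • ∑ k, x k • e k := by
  refine InnerProductSpace.ext_inner_left_basis e.toBasis fun l => ?_
  rw [e.coe_toBasis, inner_smul_right, e.orthonormal.inner_right_fintype, ← h l]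
  simp [map_sum, inner_sum, inner_smul_right, mul_comm]

section Recursion

variable {n : ℕ} {μ : Fin n → ℂ} {X : Fin n → Fin n → ℂ} {i : Fin n} {a : ℕ → ℂ}
  {b : Fin n → ℕ → ℂ}

theorem sum_mul_eq_sum_range_mul_add_sub (hμ : ∀ k, k ≠ i → μ k ≠ μ i) (ha0 : a 0 = μ i)
    (hb0 : ∀ k, b k 0 = if k = i then 1 else 0)
    (hbk : ∀ k, k ≠ i → ∀ r : ℕ, 1 ≤ r →
      b k r = (μ i - μ k)⁻¹ *
        (∑ j, X j k * b j (r - 1) - ∑ m ∈ Finset.Icc 1 (r - 1), a (r - m) * b k m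
          - μ k * b k (r - 1)))
    (har : ∀ r : ℕ, 1 ≤ r →
      a r = ∑ j, X j i * b j (r - 1) + μ i * (b i r - b i (r - 1))
        - ∑ m ∈ Finset.Icc 1 r, a (r - m) * b i m)
    (k : Fin n) (r : ℕ) :
    ∑ j, X j k * b j r =
      ∑ m ∈ range (r + 2), a (r + 1 - m) * b k m + (μ k * b k r - μ k * b k (r + 1)) := by
  rw [sum_range_eq_add_Ico _ (by omega), show r + 2 = r + 1 + 1 from rfl, Ico_add_one_right_eq_Icc,
    hb0, Nat.sub_zero]
  rcases eq_or_ne k i with rfl | hk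
  · have har' := har (r + 1) (by omega)
    simp only [add_tsub_cancel_right] at har'
    rw [if_pos rfl]
    linear_combination -har'
  · have hne : μ i - μ k ≠ 0 := sub_ne_zero.2 (hμ k hk).symm
    have hbk' := hbk k hk (r + 1) (by omega)
    simp only [add_tsub_cancel_right] at hbk'
    rw [if_neg hk, sum_Icc_succ_top (by omega), Nat.sub_self, ha0]
    field_simp at hbk'
    linear_combination -hbk'

theorem sum_mul_tsum_eq_tsum_mul_tsum (hμ : ∀ k, k ≠ i → μ k ≠ μ i) (ha0 : a 0 = μ i)
    (hb0 : ∀ k, b k 0 = if k = i then 1 else 0)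
    (hbk : ∀ k, k ≠ i → ∀ r : ℕ, 1 ≤ r →
      b k r = (μ i - μ k)⁻¹ *
        (∑ j, X j k * b j (r - 1) - ∑ m ∈ Finset.Icc 1 (r - 1), a (r - m) * b k m
          - μ k * b k (r - 1)))
    (har : ∀ r : ℕ, 1 ≤ r →
      a r = ∑ j, X j i * b j (r - 1) + μ i * (b i r - b i (r - 1))
        - ∑ m ∈ Finset.Icc 1 r, a (r - m) * b i m)
    (hasum : Summable fun s : ℕ => ‖a s‖) (hbsum : ∀ k : Fin n, Summable fun r : ℕ => ‖b k r‖)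
    (k : Fin n) :
    ∑ j, X j k * ∑' r, b j r = (∑' s, a s) * ∑' r, b k r := by
  have hb : ∀ j, HasSum (b j) (∑' r, b j r) := fun j => (hbsum j).of_norm.hasSum
  have hlhs : HasSum (fun r => ∑ j, X j k * b j r) (∑ j, X j k * ∑' r, b j r) :=
    hasSum_sum fun j _ => (hb j).mul_left (X j k)
  have hrhs := (hasSum_sum_range_succ_mul_of_summable_norm hasum (hbsum k)).add
    ((hb k).mul_left (μ k)).sub_succ
  simp_rw [← sum_mul_eq_sum_range_mul_add_sub hμ ha0 hb0 hbk har k] at hrhs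
  rw [hlhs.unique hrhs, ha0, hb0]
  split_ifs with hki
  · rw [hki]; ring
  · ring

end Recursion

theorem homotopy_eigenvalue_of_L_general {E : Type*} [NormedAddCommGroup E]
    [InnerProductSpace ℂ E] {n : ℕ}
    (e : OrthonormalBasis (Fin n) ℂ E)
    (L : E →ₗ[ℂ] E) (μ : Fin n → ℂ)
    (X : Fin n → Fin n → ℂ) (hX : ∀ m l, X m l = ⟪e l, L (e m)⟫_ℂ)
    (i : Fin n) (hμ : ∀ k, k ≠ i → μ k ≠ μ i)
    (a : ℕ → ℂ) (b : Fin n → ℕ → ℂ)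
    (ha0 : a 0 = μ i)
    (hb0 : ∀ k, b k 0 = if k = i then 1 else 0)
    (hbi : ∀ r : ℕ, 1 ≤ r → b i r = 0)
    (hbk : ∀ k, k ≠ i → ∀ r : ℕ, 1 ≤ r →
      b k r = (μ i - μ k)⁻¹ *
        (∑ j, X j k * b j (r - 1) - ∑ m ∈ Finset.Icc 1 (r - 1), a (r - m) * b k m
          - μ k * b k (r - 1)))
    (har : ∀ r : ℕ, 1 ≤ r →
      a r = ∑ j, X j i * b j (r - 1) + μ i * (b i r - b i (r - 1))
        - ∑ m ∈ Finset.Icc 1 r, a (r - m) * b i m)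
    (hasum : Summable fun s : ℕ => ‖a s‖)
    (hbsum : ∀ k : Fin n, Summable fun r : ℕ => ‖b k r‖) :
    L (∑ k, (∑' r : ℕ, b k r) • e k) =
        (∑' s : ℕ, a s) • ∑ k, (∑' r : ℕ, b k r) • e k ∧
      ⟪e i, ∑ k, (∑' r : ℕ, b k r) • e k⟫_ℂ = 1 ∧
      (∑ k, (∑' r : ℕ, b k r) • e k) ≠ 0 := by
  have heigen : ∀ l, ∑ k, ⟪e l, L (e k)⟫_ℂ * ∑' r, b k r = (∑' s, a s) * ∑' r, b l r := by
    simpa only [hX] using sum_mul_tsum_eq_tsum_mul_tsum hμ ha0 hb0 hbk har hasum hbsum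
  have hcoord : ⟪e i, ∑ k, (∑' r : ℕ, b k r) • e k⟫_ℂ = 1 := by
    rw [e.orthonormal.inner_right_fintype,
      tsum_eq_single 0 fun r hr => hbi r (Nat.one_le_iff_ne_zero.2 hr), hb0, if_pos rfl]
  refine ⟨e.map_sum_smul_eq_smul_of_matrix_eigen L _ _ heigen, hcoord, fun hx => ?_⟩
  rw [hx, inner_zero_right] at hcoord
  exact zero_ne_one hcoord

/-- If the recursively defined coefficient sequences are absolutely summable, then
`λ = Σ_s a_s` is an eigenvalue of `L` with eigenvector `x = Σ_k (Σ_r b_{k,r}) • e_k`: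
`L x = λ • x` and `x ≠ 0` (indeed `⟨x, e_i⟩ = 1`, inner product linear in the first
argument). -/
theorem homotopy_eigenvalue_of_L {E : Type*} [NormedAddCommGroup E]
    [InnerProductSpace ℂ E] [FiniteDimensional ℂ E] {n : ℕ}
    (e : OrthonormalBasis (Fin n) ℂ E)
    (K L : E →ₗ[ℂ] E) (μ : Fin n → ℂ) (hK : ∀ k, K (e k) = μ k • e k)
    (X : Fin n → Fin n → ℂ) (hX : ∀ m l, X m l = ⟪e l, L (e m)⟫_ℂ)
    (i : Fin n) (hμ : ∀ k, k ≠ i → μ k ≠ μ i)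
    (a : ℕ → ℂ) (b : Fin n → ℕ → ℂ)
    (ha0 : a 0 = μ i)
    (hb0 : ∀ k, b k 0 = if k = i then 1 else 0)
    (hbi : ∀ r : ℕ, 1 ≤ r → b i r = 0)
    (hbk : ∀ k, k ≠ i → ∀ r : ℕ, 1 ≤ r →
      b k r = (μ i - μ k)⁻¹ *
        (∑ j, X j k * b j (r - 1) - ∑ m ∈ Finset.Icc 1 (r - 1), a (r - m) * b k m
          - μ k * b k (r - 1)))
    (har : ∀ r : ℕ, 1 ≤ r →
      a r = ∑ j, X j i * b j (r - 1) + μ i * (b i r - b i (r - 1))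
        - ∑ m ∈ Finset.Icc 1 r, a (r - m) * b i m)
    (hasum : Summable fun s : ℕ => ‖a s‖)
    (hbsum : ∀ k : Fin n, Summable fun r : ℕ => ‖b k r‖) :
    L (∑ k, (∑' r : ℕ, b k r) • e k) =
        (∑' s : ℕ, a s) • ∑ k, (∑' r : ℕ, b k r) • e k ∧
      ⟪e i, ∑ k, (∑' r : ℕ, b k r) • e k⟫_ℂ = 1 ∧
      (∑ k, (∑' r : ℕ, b k r) • e k) ≠ 0 :=
  homotopy_eigenvalue_of_L_general e L μ X hX i hμ a b ha0 hb0 hbi hbk har hasum hbsum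
end
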